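/- arXiv:1906.10936 — 2 statements merged into one kernel-verified Lean document; each statement's English description precedes it below -/
import Mathlib

section
/- Let M = (E, ρ) be a matroid and let X ⊆ E. Then the collection of cyclic flats of the contraction M/X satisfies Z(M/X) = { cl(X ∪ Z) − X : Z ∈ Z(M) }. -/
open Finset

structure FinMatroid (α : Type*) [DecidableEq α] where
  E : Finset α
  rk : Finset α → ℕ
  rk_le_card : ∀ A, A ⊆ E → rk A ≤ A.card
  rk_mono : ∀ A B, A ⊆ B → B ⊆ E → rk A ≤ rk B
  rk_submod : ∀ A B, A ⊆ E → B ⊆ E → rk (A ∪ B) + rk (A ∩ B) ≤ rk A + rk B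

namespace FinMatroid

variable {α : Type*} [DecidableEq α]

/-- The closure operator `cl(A) = {e ∈ E : ρ(A ∪ {e}) = ρ(A)}`. -/
def cl (M : FinMatroid α) (A : Finset α) : Finset α :=
  M.E.filter fun e => M.rk (insert e A) = M.rk A

/-- The cyclic operator `cyc(A) = {e ∈ A : ρ(A − {e}) = ρ(A)}`. -/
def cyc (M : FinMatroid α) (A : Finset α) : Finset α :=
  A.filter fun e => M.rk (A.erase e) = M.rk A

/-- A flat is a set fixed by the closure operator. -/
def IsFlat (M : FinMatroid α) (F : Finset α) : Prop :=
  F ⊆ M.E ∧ M.cl F = F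

/-- A cyclic set is a set fixed by the cyclic operator. -/
def IsCyclic (M : FinMatroid α) (U : Finset α) : Prop :=
  U ⊆ M.E ∧ M.cyc U = U

/-- A cyclic flat is a set fixed by both the closure and the cyclic operators. -/
def IsCyclicFlat (M : FinMatroid α) (Z : Finset α) : Prop :=
  Z ⊆ M.E ∧ M.cl Z = Z ∧ M.cyc Z = Z

/-- The minor `M|Y/X`: restriction to `Y` followed by contraction of `X`. -/
def minor (M : FinMatroid α) (X Y : Finset α) (hXY : X ⊆ Y) (hY : Y ⊆ M.E) :
    FinMatroid α where
  E := Y \ X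
  rk A := M.rk (A ∪ X) - M.rk X
  rk_le_card := by
    intro A hA
    have hAE : A ⊆ M.E := fun a ha => hY (mem_sdiff.mp (hA ha)).1
    have hXE : X ⊆ M.E := hXY.trans hY
    have h1 := M.rk_submod A X hAE hXE
    have h2 := M.rk_le_card A hAE
    show M.rk (A ∪ X) - M.rk X ≤ A.card
    omega
  rk_mono := by
    intro A B hAB hB
    have hBE : B ⊆ M.E := fun a ha => hY (mem_sdiff.mp (hB ha)).1
    have hBX : B ∪ X ⊆ M.E := union_subset hBE (hXY.trans hY)
    have := M.rk_mono (A ∪ X) (B ∪ X) (union_subset_union hAB Subset.rfl) hBX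
    show M.rk (A ∪ X) - M.rk X ≤ M.rk (B ∪ X) - M.rk X
    omega
  rk_submod := by
    intro A B hA hB
    have hAE : A ⊆ M.E := fun a ha => hY (mem_sdiff.mp (hA ha)).1
    have hBE : B ⊆ M.E := fun a ha => hY (mem_sdiff.mp (hB ha)).1
    have hXE : X ⊆ M.E := hXY.trans hY
    have hAX : A ∪ X ⊆ M.E := union_subset hAE hXE
    have hBX : B ∪ X ⊆ M.E := union_subset hBE hXE
    have hsub := M.rk_submod (A ∪ X) (B ∪ X) hAX hBX
    have e1 : (A ∪ X) ∪ (B ∪ X) = (A ∪ B) ∪ X := by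
      ext x; simp only [mem_union]; tauto
    have e2 : (A ∪ X) ∩ (B ∪ X) = (A ∩ B) ∪ X := by
      ext x; simp only [mem_union, mem_inter]; tauto
    rw [e1, e2] at hsub
    have h1 : M.rk X ≤ M.rk (A ∪ X) := M.rk_mono X _ subset_union_right hAX
    have h2 : M.rk X ≤ M.rk (B ∪ X) := M.rk_mono X _ subset_union_right hBX
    have hIX : (A ∩ B) ∪ X ⊆ M.E := union_subset (inter_subset_left.trans hAE) hXE
    have hUX : (A ∪ B) ∪ X ⊆ M.E := union_subset (union_subset hAE hBE) hXE
    have h3 : M.rk X ≤ M.rk ((A ∩ B) ∪ X) := M.rk_mono X _ subset_union_right hIX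
    have h4 : M.rk X ≤ M.rk ((A ∪ B) ∪ X) := M.rk_mono X _ subset_union_right hUX
    show M.rk ((A ∪ B) ∪ X) - M.rk X + (M.rk ((A ∩ B) ∪ X) - M.rk X) ≤
      (M.rk (A ∪ X) - M.rk X) + (M.rk (B ∪ X) - M.rk X)
    omega

/-- The restriction `M|Y`. -/
def restrict (M : FinMatroid α) (Y : Finset α) (hY : Y ⊆ M.E) : FinMatroid α where
  E := Y
  rk := M.rk
  rk_le_card := fun A hA => M.rk_le_card A (hA.trans hY)
  rk_mono := fun A B hAB hB => M.rk_mono A B hAB (hB.trans hY)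
  rk_submod := fun A B hA hB => M.rk_submod A B (hA.trans hY) (hB.trans hY)

/-- `M` is binary: it is the matroid of linear dependence of a family of
vectors over the field with two elements. -/
def IsBinary (M : FinMatroid α) : Prop :=
  ∃ (m : ℕ) (φ : α → (Fin m → ZMod 2)),
    ∀ A : Finset α, A ⊆ M.E →
      M.rk A = Module.finrank (ZMod 2) (Submodule.span (ZMod 2) (φ '' (A : Set α)))

def Simple (M : FinMatroid α) : Prop :=
  (∀ e ∈ M.E, M.rk {e} = 1) ∧
    ∀ e ∈ M.E, ∀ f ∈ M.E, e ≠ f → M.rk ({e, f} : Finset α) = 2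

def NoIsthmus (M : FinMatroid α) : Prop :=
  ∀ e ∈ M.E, M.rk (M.E.erase e) = M.rk M.E

def IsMinDist (M : FinMatroid α) (d : ℕ) : Prop :=
  (∃ X ⊆ M.E, M.rk (M.E \ X) < M.rk M.E ∧ X.card = d) ∧
    ∀ X ⊆ M.E, M.rk (M.E \ X) < M.rk M.E → d ≤ X.card

def IsAtomCF (M : FinMatroid α) (Z : Finset α) : Prop :=
  M.IsCyclicFlat Z ∧ Z ≠ ∅ ∧ ¬ ∃ Z', M.IsCyclicFlat Z' ∧ ∅ ⊂ Z' ∧ Z' ⊂ Z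

def IsCoatomCF (M : FinMatroid α) (Z : Finset α) : Prop :=
  M.IsCyclicFlat Z ∧ Z ⊂ M.E ∧ ¬ ∃ Z', M.IsCyclicFlat Z' ∧ Z ⊂ Z' ∧ Z' ⊂ M.E

def IsCircuit (M : FinMatroid α) (C : Finset α) : Prop :=
  C ⊆ M.E ∧ M.rk C < C.card ∧ ∀ D ⊂ C, M.rk D = D.card


section Aux

variable {M : FinMatroid α} {A B F : Finset α} {e : α}

lemma cl_subset_E (M : FinMatroid α) (A : Finset α) : M.cl A ⊆ M.E :=
  filter_subset _ _

lemma mem_cl_iff : e ∈ M.cl A ↔ e ∈ M.E ∧ M.rk (insert e A) = M.rk A :=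
  mem_filter

lemma mem_cyc_iff : e ∈ M.cyc A ↔ e ∈ A ∧ M.rk (A.erase e) = M.rk A :=
  mem_filter

lemma cyc_subset (M : FinMatroid α) (A : Finset α) : M.cyc A ⊆ A :=
  filter_subset _ _

lemma subset_cl (hA : A ⊆ M.E) : A ⊆ M.cl A := fun e he =>
  mem_cl_iff.mpr ⟨hA he, by rw [insert_eq_self.mpr he]⟩

lemma rk_insert_le (hA : A ⊆ M.E) (he : e ∈ M.E) :
    M.rk (insert e A) ≤ M.rk A + 1 := by
  have h := M.rk_submod A {e} hA (by simpa using he)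
  have h1 : M.rk {e} ≤ 1 := by simpa using M.rk_le_card {e} (by simpa using he)
  have hu : A ∪ {e} = insert e A := by rw [union_comm, ← insert_eq]
  rw [hu] at h
  omega

lemma rk_union_card (M : FinMatroid α) (A : Finset α) (hA : A ⊆ M.E) :
    ∀ B, B ⊆ M.E → M.rk (A ∪ B) ≤ M.rk A + B.card := by
  intro B
  induction B using Finset.induction_on with
  | empty => intro _; simp
  | @insert a B ha ih =>
    intro hB
    have haE : a ∈ M.E := hB (mem_insert_self _ _)
    have hBE : B ⊆ M.E := (subset_insert _ _).trans hB
    have h1 : A ∪ insert a B = insert a (A ∪ B) := union_insert a A B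
    have h2 := rk_insert_le (M := M) (A := A ∪ B) (e := a)
      (union_subset hA hBE) haE
    have h3 := ih hBE
    rw [h1, card_insert_of_notMem ha]
    omega

lemma rk_union_eq_of_subset_cl (hA : A ⊆ M.E) :
    ∀ B, B ⊆ M.cl A → M.rk (A ∪ B) = M.rk A := by
  intro B
  induction B using Finset.induction_on with
  | empty => intro _; simp
  | @insert a B ha ih =>
    intro hB
    have haC : a ∈ M.cl A := hB (mem_insert_self _ _)
    have hBC : B ⊆ M.cl A := (subset_insert _ _).trans hB
    have haE : a ∈ M.E := (cl_subset_E M A) haC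
    have hBE : B ⊆ M.E := hBC.trans (cl_subset_E M A)
    have hra : M.rk (insert a A) = M.rk A := (mem_cl_iff.mp haC).2
    have hih : M.rk (A ∪ B) = M.rk A := ih hBC
    have hsub := M.rk_submod (insert a A) (A ∪ B)
      (insert_subset haE hA) (union_subset hA hBE)
    have h1 : insert a A ∪ (A ∪ B) = A ∪ insert a B := by
      rw [union_insert, insert_union, ← union_assoc, union_self]
    rw [h1] at hsub
    have h2 : A ⊆ insert a A ∩ (A ∪ B) :=
      subset_inter (subset_insert _ _) subset_union_left
    have h3 : M.rk A ≤ M.rk (insert a A ∩ (A ∪ B)) :=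
      M.rk_mono _ _ h2 (inter_subset_left.trans (insert_subset haE hA))
    have h4 : M.rk A ≤ M.rk (A ∪ insert a B) :=
      M.rk_mono A _ subset_union_left
        (union_subset hA (insert_subset haE hBE))
    omega

lemma rk_cl (hA : A ⊆ M.E) : M.rk (M.cl A) = M.rk A := by
  have h : A ∪ M.cl A = M.cl A := union_eq_right.mpr (subset_cl hA)
  rw [← h]
  exact rk_union_eq_of_subset_cl hA _ (Finset.Subset.refl _)

lemma cl_mono (hAB : A ⊆ B) (hB : B ⊆ M.E) : M.cl A ⊆ M.cl B := by
  intro e he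
  rw [mem_cl_iff] at he ⊢
  obtain ⟨heE, hr⟩ := he
  refine ⟨heE, ?_⟩
  have hA : A ⊆ M.E := hAB.trans hB
  have hsub := M.rk_submod (insert e A) B (insert_subset heE hA) hB
  have h1 : insert e A ∪ B = insert e B := by
    rw [insert_union, union_eq_right.mpr hAB]
  rw [h1] at hsub
  have h2 : M.rk A ≤ M.rk (insert e A ∩ B) :=
    M.rk_mono A _ (subset_inter (subset_insert _ _) hAB)
      (inter_subset_right.trans hB)
  have h3 : M.rk B ≤ M.rk (insert e B) :=
    M.rk_mono B _ (subset_insert _ _) (insert_subset heE hB)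
  omega

lemma cl_idem (hA : A ⊆ M.E) : M.cl (M.cl A) = M.cl A := by
  apply Finset.Subset.antisymm
  · intro e he
    rw [mem_cl_iff] at he ⊢
    obtain ⟨heE, hr⟩ := he
    refine ⟨heE, ?_⟩
    have h1 : M.rk (insert e A) ≤ M.rk (insert e (M.cl A)) :=
      M.rk_mono _ _ (insert_subset_insert _ (subset_cl hA))
        (insert_subset heE (cl_subset_E M A))
    have h2 : M.rk A ≤ M.rk (insert e A) :=
      M.rk_mono A _ (subset_insert _ _) (insert_subset heE hA)
    have h3 : M.rk (M.cl A) = M.rk A := rk_cl hA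
    omega
  · exact subset_cl (cl_subset_E M A)

lemma cyc_mono (hAB : A ⊆ B) (hB : B ⊆ M.E) : M.cyc A ⊆ M.cyc B := by
  intro e he
  rw [mem_cyc_iff] at he ⊢
  obtain ⟨heA, hr⟩ := he
  refine ⟨hAB heA, ?_⟩
  have hA : A ⊆ M.E := hAB.trans hB
  have hsub := M.rk_submod (B.erase e) A ((erase_subset _ _).trans hB) hA
  have h1 : B.erase e ∪ A = B := by
    ext x
    simp only [mem_union, mem_erase]
    constructor
    · rintro (⟨_, hx⟩ | hx); exact hx; exact hAB hx
    · intro hx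
      by_cases hxe : x = e
      · exact Or.inr (hxe ▸ heA)
      · exact Or.inl ⟨hxe, hx⟩
  rw [h1] at hsub
  have h2 : M.rk (A.erase e) ≤ M.rk (B.erase e ∩ A) := by
    refine M.rk_mono _ _ ?_ (inter_subset_right.trans hA)
    intro x hx
    rw [mem_erase] at hx
    exact mem_inter.mpr ⟨mem_erase.mpr ⟨hx.1, hAB hx.2⟩, hx.2⟩
  have h3 : M.rk (B.erase e) ≤ M.rk B :=
    M.rk_mono _ _ (erase_subset _ _) hB
  omega

lemma rk_erase_cases (hA : A ⊆ M.E) (heA : e ∈ A) :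
    M.rk A ≤ M.rk (A.erase e) + 1 ∧ M.rk (A.erase e) ≤ M.rk A := by
  have h1 := rk_insert_le (M := M) (A := A.erase e) (e := e)
    ((erase_subset _ _).trans hA) (hA heA)
  rw [insert_erase heA] at h1
  exact ⟨h1, M.rk_mono _ _ (erase_subset _ _) hA⟩

lemma rk_cyc_add (M : FinMatroid α) :
    ∀ A : Finset α, A ⊆ M.E → M.rk A = M.rk (M.cyc A) + (A \ M.cyc A).card := by
  intro A
  induction A using Finset.strongInduction with
  | _ A ih =>
    intro hA
    by_cases h : A \ M.cyc A = ∅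
    · have hC : M.cyc A = A :=
        Finset.Subset.antisymm (cyc_subset M A) (sdiff_eq_empty_iff_subset.mp h)
      rw [hC]; simp
    · obtain ⟨e, he⟩ := nonempty_iff_ne_empty.mpr h
      rw [mem_sdiff] at he
      obtain ⟨heA, heC⟩ := he
      have hAe : A.erase e ⊂ A := erase_ssubset heA
      have hAeE : A.erase e ⊆ M.E := (erase_subset _ _).trans hA
      -- r(A.erase e) + 1 = r A
      have hco : M.rk (A.erase e) + 1 = M.rk A := by
        have h1 := rk_erase_cases (M := M) hA heA
        have h2 : M.rk (A.erase e) ≠ M.rk A := fun hc =>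
          heC (mem_cyc_iff.mpr ⟨heA, hc⟩)
        omega
      have hcyc : M.cyc (A.erase e) = M.cyc A := by
        apply Finset.Subset.antisymm
        · exact (cyc_mono (erase_subset _ _) hA)
        · intro f hf
          rw [mem_cyc_iff] at hf
          obtain ⟨hfA, hfr⟩ := hf
          have hfe : f ≠ e := fun hc => heC (hc ▸ mem_cyc_iff.mpr ⟨hfA, hfr⟩)
          refine mem_cyc_iff.mpr ⟨mem_erase.mpr ⟨hfe, hfA⟩, ?_⟩
          have heAf : e ∈ A.erase f := mem_erase.mpr ⟨fun hc => hfe hc.symm, heA⟩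
          have h1 := rk_erase_cases (M := M)
            ((erase_subset _ _).trans hA) heAf
          have hcomm : (A.erase f).erase e = (A.erase e).erase f := by
            ext x; simp only [mem_erase]; tauto
          rw [hcomm, hfr] at h1
          have h2 : M.rk ((A.erase e).erase f) ≤ M.rk (A.erase e) :=
            M.rk_mono _ _ (erase_subset _ _) hAeE
          omega
      have hcard : A.erase e \ M.cyc A = (A \ M.cyc A).erase e := by
        ext x; simp only [mem_erase, mem_sdiff]; tauto
      have hIH := ih (A.erase e) hAe hAeE
      rw [hcyc, hcard, card_erase_of_mem (mem_sdiff.mpr ⟨heA, heC⟩)] at hIH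
      have hpos : 0 < (A \ M.cyc A).card :=
        card_pos.mpr ⟨e, mem_sdiff.mpr ⟨heA, heC⟩⟩
      omega

lemma cyc_idem (hA : A ⊆ M.E) : M.cyc (M.cyc A) = M.cyc A := by
  apply Finset.Subset.antisymm (cyc_subset _ _)
  intro e he
  have heA : e ∈ A := cyc_subset M A he
  have hre : M.rk (A.erase e) = M.rk A := (mem_cyc_iff.mp he).2
  have hCE : M.cyc A ⊆ M.E := (cyc_subset M A).trans hA
  refine mem_cyc_iff.mpr ⟨he, ?_⟩
  have hF1 := rk_cyc_add M A hA
  have hun : A.erase e = (M.cyc A).erase e ∪ (A \ M.cyc A) := by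
    ext x
    simp only [mem_erase, mem_union, mem_sdiff]
    constructor
    · rintro ⟨hxe, hxA⟩
      by_cases hx : x ∈ M.cyc A
      · exact Or.inl ⟨hxe, hx⟩
      · exact Or.inr ⟨hxA, hx⟩
    · rintro (⟨hxe, hx⟩ | ⟨hxA, hx⟩)
      · exact ⟨hxe, cyc_subset M A hx⟩
      · exact ⟨fun hc => hx (hc ▸ he), hxA⟩
  have h1 : M.rk (A.erase e) ≤ M.rk ((M.cyc A).erase e) + (A \ M.cyc A).card := by
    rw [hun]
    exact rk_union_card M _ ((erase_subset _ _).trans hCE) _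
      ((sdiff_subset).trans hA)
  have h2 : M.rk ((M.cyc A).erase e) ≤ M.rk (M.cyc A) :=
    M.rk_mono _ _ (erase_subset _ _) hCE
  omega

lemma cl_cyc_of_flat (hF : F ⊆ M.E) (hflat : M.cl F = F) :
    M.cl (M.cyc F) = M.cyc F := by
  apply Finset.Subset.antisymm
  · intro e he
    have heF : e ∈ F := by
      have := cl_mono (M := M) (cyc_subset M F) hF he
      rwa [hflat] at this
    by_contra heC
    have hr : M.rk (insert e (M.cyc F)) = M.rk (M.cyc F) := (mem_cl_iff.mp he).2
    have hCE : M.cyc F ⊆ M.E := (cyc_subset M F).trans hF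
    have heFC : e ∈ F \ M.cyc F := mem_sdiff.mpr ⟨heF, heC⟩
    have h1 : M.rk F ≤ M.rk (insert e (M.cyc F)) + (F \ insert e (M.cyc F)).card := by
      have := rk_union_card M (insert e (M.cyc F)) (insert_subset (hF heF) hCE)
        (F \ insert e (M.cyc F)) ((sdiff_subset).trans hF)
      rwa [union_sdiff_of_subset (insert_subset heF (cyc_subset M F))] at this
    have hcard : F \ insert e (M.cyc F) = (F \ M.cyc F).erase e := by
      ext x; simp only [mem_sdiff, mem_erase, mem_insert]; tauto
    rw [hcard, card_erase_of_mem heFC] at h1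
    have hF1 := rk_cyc_add M F hF
    have hpos : 0 < (F \ M.cyc F).card := card_pos.mpr ⟨e, heFC⟩
    omega
  · exact subset_cl ((cyc_subset M F).trans hF)

lemma minor_cl (M : FinMatroid α) (X : Finset α) (hX : X ⊆ M.E) (A : Finset α)
    (hA : A ⊆ M.E \ X) :
    (M.minor X M.E hX (Finset.Subset.refl M.E)).cl A = M.cl (A ∪ X) \ X := by
  have hAE : A ⊆ M.E := fun a ha => (mem_sdiff.mp (hA ha)).1
  have hAX : A ∪ X ⊆ M.E := union_subset hAE hX
  ext e
  show e ∈ (M.E \ X).filter _ ↔ _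
  rw [mem_filter, mem_sdiff, mem_sdiff, mem_cl_iff]
  have hins : insert e A ∪ X = insert e (A ∪ X) := insert_union e A X
  constructor
  · rintro ⟨⟨heE, heX⟩, hr⟩
    rw [show (M.minor X M.E hX (Finset.Subset.refl M.E)).rk (insert e A)
        = M.rk (insert e A ∪ X) - M.rk X from rfl,
      show (M.minor X M.E hX (Finset.Subset.refl M.E)).rk A
        = M.rk (A ∪ X) - M.rk X from rfl, hins] at hr
    have h1 : M.rk X ≤ M.rk (A ∪ X) := M.rk_mono X _ subset_union_right hAX
    have h2 : M.rk (A ∪ X) ≤ M.rk (insert e (A ∪ X)) :=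
      M.rk_mono _ _ (subset_insert _ _) (insert_subset heE hAX)
    exact ⟨⟨heE, by omega⟩, heX⟩
  · rintro ⟨⟨heE, hr⟩, heX⟩
    refine ⟨⟨heE, heX⟩, ?_⟩
    rw [show (M.minor X M.E hX (Finset.Subset.refl M.E)).rk (insert e A)
        = M.rk (insert e A ∪ X) - M.rk X from rfl,
      show (M.minor X M.E hX (Finset.Subset.refl M.E)).rk A
        = M.rk (A ∪ X) - M.rk X from rfl, hins]
    omega

lemma minor_cyc (M : FinMatroid α) (X : Finset α) (hX : X ⊆ M.E) (A : Finset α)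
    (hA : A ⊆ M.E \ X) :
    (M.minor X M.E hX (Finset.Subset.refl M.E)).cyc A = M.cyc (A ∪ X) \ X := by
  have hAE : A ⊆ M.E := fun a ha => (mem_sdiff.mp (hA ha)).1
  have hAX : A ∪ X ⊆ M.E := union_subset hAE hX
  ext e
  show e ∈ A.filter _ ↔ _
  rw [mem_filter, mem_sdiff, mem_cyc_iff]
  constructor
  · rintro ⟨heA, hr⟩
    have heX : e ∉ X := (mem_sdiff.mp (hA heA)).2
    rw [show (M.minor X M.E hX (Finset.Subset.refl M.E)).rk (A.erase e)
        = M.rk (A.erase e ∪ X) - M.rk X from rfl,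
      show (M.minor X M.E hX (Finset.Subset.refl M.E)).rk A
        = M.rk (A ∪ X) - M.rk X from rfl] at hr
    have hers : A.erase e ∪ X = (A ∪ X).erase e := by
      ext x
      simp only [mem_union, mem_erase]
      constructor
      · rintro (⟨hxe, hx⟩ | hx)
        · exact ⟨hxe, Or.inl hx⟩
        · exact ⟨fun hc => heX (hc ▸ hx), Or.inr hx⟩
      · rintro ⟨hxe, hx | hx⟩
        · exact Or.inl ⟨hxe, hx⟩
        · exact Or.inr hx
    rw [hers] at hr
    have h1 : M.rk X ≤ M.rk ((A ∪ X).erase e) := by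
      refine M.rk_mono X _ ?_ ((erase_subset _ _).trans hAX)
      intro x hx
      exact mem_erase.mpr ⟨fun hc => heX (hc ▸ hx), mem_union_right _ hx⟩
    have h2 : M.rk ((A ∪ X).erase e) ≤ M.rk (A ∪ X) :=
      M.rk_mono _ _ (erase_subset _ _) hAX
    exact ⟨⟨mem_union_left _ heA, by omega⟩, heX⟩
  · rintro ⟨⟨heAX, hr⟩, heX⟩
    have heA : e ∈ A := (mem_union.mp heAX).resolve_right heX
    refine ⟨heA, ?_⟩
    rw [show (M.minor X M.E hX (Finset.Subset.refl M.E)).rk (A.erase e)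
        = M.rk (A.erase e ∪ X) - M.rk X from rfl,
      show (M.minor X M.E hX (Finset.Subset.refl M.E)).rk A
        = M.rk (A ∪ X) - M.rk X from rfl]
    have hers : A.erase e ∪ X = (A ∪ X).erase e := by
      ext x
      simp only [mem_union, mem_erase]
      constructor
      · rintro (⟨hxe, hx⟩ | hx)
        · exact ⟨hxe, Or.inl hx⟩
        · exact ⟨fun hc => heX (hc ▸ hx), Or.inr hx⟩
      · rintro ⟨hxe, hx | hx⟩
        · exact Or.inl ⟨hxe, hx⟩
        · exact Or.inr hx
    rw [hers, hr]

end Aux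


end FinMatroid

open FinMatroid in

/-- `Z(M/X) = { cl(X ∪ Z) − X : Z ∈ Z(M) }`, where the contraction
`M/X` is the minor `M|E/X`. -/
theorem cyclicFlats_contract {α : Type*} [DecidableEq α] (M : FinMatroid α)
    (X : Finset α) (hX : X ⊆ M.E) :
    {Z : Finset α | (M.minor X M.E hX (Finset.Subset.refl M.E)).IsCyclicFlat Z} =
      {W : Finset α | ∃ Z, M.IsCyclicFlat Z ∧ W = M.cl (X ∪ Z) \ X} := by
  classical
  ext W
  simp only [Set.mem_setOf_eq]
  constructor
  · rintro ⟨hWE, hWcl, hWcyc⟩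
    have hWE' : W ⊆ M.E \ X := hWE
    have hWEE : W ⊆ M.E := fun a ha => (mem_sdiff.mp (hWE' ha)).1
    have hWX : W ∪ X ⊆ M.E := union_subset hWEE hX
    have hFE : M.cl (W ∪ X) ⊆ M.E := cl_subset_E M (W ∪ X)
    have hWcl' : M.cl (W ∪ X) \ X = W := by
      rw [minor_cl M X hX W hWE'] at hWcl; exact hWcl
    have hXF : X ⊆ M.cl (W ∪ X) := fun x hx => subset_cl hWX (mem_union_right _ hx)
    have hflat : M.cl (M.cl (W ∪ X)) = M.cl (W ∪ X) := cl_idem hWX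
    have hWZ : W ⊆ M.cyc (M.cl (W ∪ X)) := by
      intro e heW
      have he : e ∈ (M.minor X M.E hX (Finset.Subset.refl M.E)).cyc W := by
        rw [hWcyc]; exact heW
      rw [minor_cyc M X hX W hWE'] at he
      exact cyc_mono (subset_cl hWX) hFE (mem_sdiff.mp he).1
    have hFXZ : M.cl (W ∪ X) = X ∪ M.cyc (M.cl (W ∪ X)) := by
      apply Finset.Subset.antisymm
      · intro x hx
        by_cases hxX : x ∈ X
        · exact mem_union_left _ hxX
        · have hxW : x ∈ W := hWcl' ▸ mem_sdiff.mpr ⟨hx, hxX⟩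
          exact mem_union_right _ (hWZ hxW)
      · exact union_subset hXF (cyc_subset M _)
    refine ⟨M.cyc (M.cl (W ∪ X)), ⟨(cyc_subset M _).trans hFE,
      cl_cyc_of_flat hFE hflat, cyc_idem hFE⟩, ?_⟩
    rw [← hFXZ, hflat, hWcl']
  · rintro ⟨Z, ⟨hZE, hZcl, hZcyc⟩, rfl⟩
    have hXZ : X ∪ Z ⊆ M.E := union_subset hX hZE
    have hFE : M.cl (X ∪ Z) ⊆ M.E := cl_subset_E M (X ∪ Z)
    have hXF : X ⊆ M.cl (X ∪ Z) := fun x hx => subset_cl hXZ (mem_union_left _ hx)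
    have hZF : Z ⊆ M.cl (X ∪ Z) := fun x hx => subset_cl hXZ (mem_union_right _ hx)
    have hW : M.cl (X ∪ Z) \ X ∪ X = M.cl (X ∪ Z) := sdiff_union_of_subset hXF
    have hsub : M.cl (X ∪ Z) \ X ⊆ M.E \ X := fun x hx =>
      mem_sdiff.mpr ⟨hFE (mem_sdiff.mp hx).1, (mem_sdiff.mp hx).2⟩
    have hclF : M.cl (M.cl (X ∪ Z)) = M.cl (X ∪ Z) := cl_idem hXZ
    have hrF : M.rk (M.cl (X ∪ Z)) = M.rk (X ∪ Z) := rk_cl hXZ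
    refine ⟨hsub, ?_, ?_⟩
    · rw [minor_cl M X hX _ hsub, hW, hclF]
    · rw [minor_cyc M X hX _ hsub, hW]
      apply Finset.Subset.antisymm
      · exact sdiff_subset_sdiff (cyc_subset M _) (Finset.Subset.refl X)
      · intro e he
        rw [mem_sdiff] at he
        obtain ⟨heF, heX⟩ := he
        refine mem_sdiff.mpr ⟨mem_cyc_iff.mpr ⟨heF, ?_⟩, heX⟩
        have hle : M.rk ((M.cl (X ∪ Z)).erase e) ≤ M.rk (M.cl (X ∪ Z)) :=
          M.rk_mono _ _ (erase_subset _ _) hFE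
        by_cases heZ : e ∈ Z
        · have h1 : M.rk (Z.erase e) = M.rk Z :=
            (mem_cyc_iff.mp (by rw [hZcyc]; exact heZ)).2
          have h2 : e ∈ M.cl (Z.erase e) := mem_cl_iff.mpr
            ⟨hZE heZ, by rw [insert_erase heZ, h1]⟩
          have h3 : M.cl (Z.erase e) ⊆ M.cl ((M.cl (X ∪ Z)).erase e) :=
            cl_mono (erase_subset_erase _ hZF) ((erase_subset _ _).trans hFE)
          have h4 := (mem_cl_iff.mp (h3 h2)).2
          rw [insert_erase heF] at h4
          exact h4.symm
        · have hsub2 : X ∪ Z ⊆ (M.cl (X ∪ Z)).erase e := by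
            intro x hx
            refine mem_erase.mpr ⟨?_, subset_cl hXZ hx⟩
            rintro rfl
            rcases mem_union.mp hx with h | h
            · exact heX h
            · exact heZ h
          have h5 : M.rk (X ∪ Z) ≤ M.rk ((M.cl (X ∪ Z)).erase e) :=
            M.rk_mono _ _ hsub2 ((erase_subset _ _).trans hFE)
          omega
end

section
/- Let M = (E, ρ) be a matroid and let X ⊆ E be an independent set; set k = ρ(E) − ρ(X) and n = |E − X|. Then the contraction M/X is isomorphic to the uniform matroid U_n^k (equivalently, ρ(A ∪ X) − ρ(X) = min(|A|, k) for every A ⊆ E − X) if and only if either X is a basis of M, or both of the following conditions hold: (1) X is a flat of M, and (2) for every cyclic flat Z of M other than the bottom cyclic flat cl(∅), one has cl(X ∪ Z) = E. -/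
open Finset

section Aux

namespace FinMatroid

variable {α : Type*} [DecidableEq α] {M : FinMatroid α}

lemma rk_empty (M : FinMatroid α) : M.rk ∅ = 0 :=
  Nat.le_zero.mp (by simpa using M.rk_le_card ∅ (empty_subset _))

lemma rk_union_le {A B : Finset α} (hA : A ⊆ M.E) (hB : B ⊆ M.E) :
    M.rk (A ∪ B) ≤ M.rk A + B.card := by
  have h1 := M.rk_submod A B hA hB
  have h2 := M.rk_le_card B hB
  omega

lemma indep_subset {X S : Finset α} (hX : X ⊆ M.E) (hXi : M.rk X = X.card)
    (hS : S ⊆ X) : M.rk S = S.card := by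
  have hu : S ∪ (X \ S) = X := by
    ext x; simp only [mem_union, mem_sdiff]; constructor
    · rintro (h | ⟨h, _⟩) <;> [exact hS h; exact h]
    · intro h; by_cases hx : x ∈ S <;> tauto
  have h1 : M.rk (S ∪ (X \ S)) ≤ M.rk S + (X \ S).card :=
    rk_union_le (hS.trans hX) ((sdiff_subset).trans hX)
  rw [hu] at h1
  have h2 := M.rk_le_card S (hS.trans hX)
  have h3 : (X \ S).card = X.card - S.card := card_sdiff_of_subset hS
  have h4 : S.card ≤ X.card := card_le_card hS
  omega

lemma cl_subset_ground (M : FinMatroid α) (Y : Finset α) : M.cl Y ⊆ M.E :=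
  filter_subset _ _

lemma subset_cl_s7 {Y : Finset α} (hY : Y ⊆ M.E) : Y ⊆ M.cl Y := fun e he =>
  mem_filter.mpr ⟨hY he, by rw [insert_eq_self.mpr he]⟩

lemma cl_mono_s7 {Y₁ Y₂ : Finset α} (h12 : Y₁ ⊆ Y₂) (hY₂ : Y₂ ⊆ M.E) :
    M.cl Y₁ ⊆ M.cl Y₂ := by
  intro e he
  obtain ⟨heE, hr⟩ := mem_filter.mp he
  refine mem_filter.mpr ⟨heE, le_antisymm ?_
    (M.rk_mono Y₂ _ (subset_insert _ _) (insert_subset heE hY₂))⟩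
  have hsub := M.rk_submod (insert e Y₁) Y₂ (insert_subset heE (h12.trans hY₂)) hY₂
  have hu : insert e Y₁ ∪ Y₂ = insert e Y₂ := by
    ext x; simp only [mem_union, mem_insert]; constructor
    · rintro ((rfl | h) | h) <;> tauto
    · rintro (rfl | h) <;> tauto
  have hi : Y₁ ⊆ insert e Y₁ ∩ Y₂ := subset_inter (subset_insert _ _) h12
  have h1 := M.rk_mono Y₁ _ hi (inter_subset_right.trans hY₂)
  rw [hu] at hsub
  omega

lemma rk_union_eq_self {Y S : Finset α} (hY : Y ⊆ M.E) (hS : S ⊆ M.E)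
    (h : ∀ e ∈ S, M.rk (insert e Y) = M.rk Y) : M.rk (Y ∪ S) = M.rk Y := by
  induction S using Finset.induction with
  | empty => rw [union_empty]
  | @insert a S ha ih =>
    have haE : a ∈ M.E := hS (mem_insert_self _ _)
    have hSE : S ⊆ M.E := (subset_insert _ _).trans hS
    have hYS : Y ∪ S ⊆ M.E := union_subset hY hSE
    have hIH : M.rk (Y ∪ S) = M.rk Y := ih hSE fun e he => h e (mem_insert_of_mem he)
    have hsub := M.rk_submod (Y ∪ S) (insert a Y) hYS (insert_subset haE hY)
    have hu : (Y ∪ S) ∪ insert a Y = insert a (Y ∪ S) := by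
      ext x; simp only [mem_union, mem_insert]; tauto
    have hi : Y ⊆ (Y ∪ S) ∩ insert a Y := subset_inter subset_union_left (subset_insert _ _)
    have h1 := M.rk_mono Y _ hi (inter_subset_left.trans hYS)
    have h2 := M.rk_mono Y (insert a (Y ∪ S))
      (subset_union_left.trans (subset_insert _ _)) (insert_subset haE hYS)
    have h3 := h a (mem_insert_self _ _)
    rw [hu] at hsub
    have he : Y ∪ insert a S = insert a (Y ∪ S) := by
      ext x; simp only [mem_union, mem_insert]; tauto
    rw [he]
    omega

lemma rk_cl_s7 {Y : Finset α} (hY : Y ⊆ M.E) : M.rk (M.cl Y) = M.rk Y := by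
  have h := rk_union_eq_self hY (M.cl_subset_ground Y) fun e he => (mem_filter.mp he).2
  rwa [union_eq_right.mpr (subset_cl_s7 hY)] at h

lemma cl_idem_s7 {Y : Finset α} (hY : Y ⊆ M.E) : M.cl (M.cl Y) = M.cl Y := by
  apply Subset.antisymm _ (subset_cl_s7 (M.cl_subset_ground Y))
  intro e he
  obtain ⟨heE, hr⟩ := mem_filter.mp he
  refine mem_filter.mpr ⟨heE, le_antisymm ?_
    (M.rk_mono Y _ (subset_insert _ _) (insert_subset heE hY))⟩
  have h1 : M.rk (insert e Y) ≤ M.rk (insert e (M.cl Y)) :=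
    M.rk_mono _ _ (insert_subset_insert _ (subset_cl_s7 hY))
      (insert_subset heE (M.cl_subset_ground Y))
  rw [hr, rk_cl_s7 hY] at h1
  exact h1

lemma cl_eq_ground_iff {Y : Finset α} (hY : Y ⊆ M.E) :
    M.cl Y = M.E ↔ M.rk Y = M.rk M.E := by
  constructor
  · intro h; rw [← rk_cl_s7 hY, h]
  · intro h
    apply Subset.antisymm (M.cl_subset_ground Y)
    intro e he
    refine mem_filter.mpr ⟨he, le_antisymm ?_
      (M.rk_mono Y _ (subset_insert _ _) (insert_subset he hY))⟩
    calc M.rk (insert e Y) ≤ M.rk M.E := M.rk_mono _ _ (insert_subset he hY) Subset.rfl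
    _ = M.rk Y := h.symm

lemma rk_union_erase {Y B : Finset α} {e : α} (hY : Y ⊆ M.E) (hB : B ⊆ M.E)
    (h : M.rk (B.erase e) = M.rk B) : M.rk (Y ∪ B.erase e) = M.rk (Y ∪ B) := by
  have hsub := M.rk_submod (Y ∪ B.erase e) B
    (union_subset hY ((erase_subset _ _).trans hB)) hB
  have hu : (Y ∪ B.erase e) ∪ B = Y ∪ B := by
    ext x; simp only [mem_union, mem_erase]; tauto
  have hi : B.erase e ⊆ (Y ∪ B.erase e) ∩ B :=
    subset_inter subset_union_right (erase_subset _ _)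
  have h1 := M.rk_mono _ _ hi (inter_subset_right.trans hB)
  have h2 := M.rk_mono (Y ∪ B.erase e) (Y ∪ B)
    (union_subset_union Subset.rfl (erase_subset _ _)) (union_subset hY hB)
  rw [hu] at hsub
  omega

lemma rk_sdiff_coloops : ∀ D U : Finset α, D ⊆ U → U ⊆ M.E →
    (∀ d ∈ D, M.rk (U.erase d) + 1 ≤ M.rk U) → M.rk (U \ D) + D.card ≤ M.rk U := by
  intro D
  induction D using Finset.induction with
  | empty => intro U _ _ _; simp
  | @insert d D hd ih =>
    intro U hDU hU hcol
    have hdU : d ∈ U := hDU (mem_insert_self _ _)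
    have hU' : U.erase d ⊆ M.E := (erase_subset _ _).trans hU
    have hDU' : D ⊆ U.erase d := fun x hx =>
      mem_erase.mpr ⟨fun h => hd (h ▸ hx), hDU (mem_insert_of_mem hx)⟩
    have hrkd := hcol d (mem_insert_self _ _)
    have hins : M.rk U ≤ M.rk (U.erase d) + 1 := by
      have h1 : M.rk (U.erase d ∪ {d}) ≤ M.rk (U.erase d) + 1 := by
        simpa using rk_union_le hU' (singleton_subset_iff.mpr (hU hdU))
      have h2 : U.erase d ∪ {d} = U := by
        ext x; simp only [mem_union, mem_erase, mem_singleton]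
        constructor
        · rintro (⟨_, h⟩ | rfl) <;> [exact h; exact hdU]
        · intro h; by_cases hx : x = d <;> tauto
      rwa [h2] at h1
    have hcol' : ∀ d' ∈ D, M.rk ((U.erase d).erase d') + 1 ≤ M.rk (U.erase d) := by
      intro d' hd'
      have hne : d' ≠ d := fun h => hd (h ▸ hd')
      have hsub := M.rk_submod (U.erase d) (U.erase d') hU' ((erase_subset _ _).trans hU)
      have hu : U.erase d ∪ U.erase d' = U := by
        ext x; simp only [mem_union, mem_erase]
        constructor
        · rintro (⟨_, h⟩ | ⟨_, h⟩) <;> exact h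
        · intro h
          rcases eq_or_ne x d with rfl | hxd
          · exact Or.inr ⟨fun hc => hne hc.symm, h⟩
          · exact Or.inl ⟨hxd, h⟩
      have hi : U.erase d ∩ U.erase d' = (U.erase d).erase d' := by
        ext x; simp only [mem_inter, mem_erase]; tauto
      rw [hu, hi] at hsub
      have h3 := hcol d' (mem_insert_of_mem hd')
      omega
    have hIH := ih (U.erase d) hDU' hU' hcol'
    have heq : U.erase d \ D = U \ insert d D := by
      ext x; simp only [mem_sdiff, mem_erase, mem_insert]; tauto
    rw [heq] at hIH
    rw [card_insert_of_notMem hd]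
    omega

lemma cl_cyc_eq {F : Finset α} (hF : F ⊆ M.E) (hflat : M.cl F = F) :
    M.cl (M.cyc F) = M.cyc F := by
  have hZF : M.cyc F ⊆ F := filter_subset _ _
  apply Subset.antisymm _ (subset_cl_s7 (hZF.trans hF))
  intro e he
  have heF : e ∈ F := hflat ▸ cl_mono_s7 hZF hF he
  by_cases heZ : e ∈ M.cyc F
  · exact heZ
  · have hsub : M.cyc F ⊆ F.erase e := fun x hx =>
      mem_erase.mpr ⟨fun h => heZ (h ▸ hx), hZF hx⟩
    have h1 : e ∈ M.cl (F.erase e) := cl_mono_s7 hsub ((erase_subset _ _).trans hF) he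
    obtain ⟨_, hr⟩ := mem_filter.mp h1
    rw [insert_erase heF] at hr
    exact mem_filter.mpr ⟨heF, hr.symm⟩

lemma cyc_cyc_eq {F : Finset α} (hF : F ⊆ M.E) : M.cyc (M.cyc F) = M.cyc F := by
  apply Subset.antisymm (filter_subset _ _)
  intro e he
  obtain ⟨heF, hre⟩ := mem_filter.mp he
  refine mem_filter.mpr ⟨he, ?_⟩
  by_contra hne
  have hZF : M.cyc F ⊆ F := filter_subset _ _
  have hZE : M.cyc F ⊆ M.E := hZF.trans hF
  have hDcol : ∀ d ∈ F \ M.cyc F, M.rk (F.erase d) + 1 ≤ M.rk F := by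
    intro d hd
    obtain ⟨hdF, hdZ⟩ := mem_sdiff.mp hd
    have h1 : M.rk (F.erase d) ≤ M.rk F := M.rk_mono _ _ (erase_subset _ _) hF
    have h2 : M.rk (F.erase d) ≠ M.rk F := fun h => hdZ (mem_filter.mpr ⟨hdF, h⟩)
    omega
  have hco := rk_sdiff_coloops (F \ M.cyc F) F sdiff_subset hF hDcol
  have hFD : F \ (F \ M.cyc F) = M.cyc F := by
    rw [sdiff_sdiff_right_self, inf_eq_inter, inter_eq_right.mpr hZF]
  rw [hFD] at hco
  have h3 : M.rk ((M.cyc F).erase e) + 1 ≤ M.rk (M.cyc F) := by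
    have := M.rk_mono ((M.cyc F).erase e) (M.cyc F) (erase_subset _ _) hZE
    omega
  have hEq : F.erase e = (M.cyc F).erase e ∪ (F \ M.cyc F) := by
    ext x; simp only [mem_erase, mem_union, mem_sdiff]
    constructor
    · intro ⟨hxe, hxF⟩
      by_cases hx : x ∈ M.cyc F <;> tauto
    · rintro (⟨hxe, hx⟩ | ⟨hx, hxZ⟩)
      · exact ⟨hxe, hZF hx⟩
      · exact ⟨fun h => hxZ (h ▸ he), hx⟩
  have h4 : M.rk (F.erase e) ≤ M.rk ((M.cyc F).erase e) + (F \ M.cyc F).card := by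
    rw [hEq]; exact rk_union_le ((erase_subset _ _).trans hZE) (sdiff_subset.trans hF)
  omega

end FinMatroid

end Aux




/-- For an independent `X ⊆ E` with `k = ρ(E) − ρ(X)`, the contraction
`M/X` is uniform (`ρ(A ∪ X) − ρ(X) = min(|A|, k)` for all `A ⊆ E − X`) iff either `X`
is a basis of `M`, or `X` is a flat and `cl(X ∪ Z) = E` for every cyclic flat `Z`
other than the bottom cyclic flat `cl(∅)`. -/
theorem contraction_uniform_iff {α : Type*} [DecidableEq α] (M : FinMatroid α)
    (X : Finset α) (hXE : X ⊆ M.E) (hXind : M.rk X = X.card) :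
    (∀ A ⊆ M.E \ X, M.rk (A ∪ X) - M.rk X = min A.card (M.rk M.E - M.rk X)) ↔
      (M.rk X = M.rk M.E ∨
        (M.IsFlat X ∧
          ∀ Z, M.IsCyclicFlat Z → Z ≠ M.cl ∅ → M.cl (X ∪ Z) = M.E)) := by
  have hEE : M.E ⊆ M.E := Finset.Subset.rfl
  have hrXE : M.rk X ≤ M.rk M.E := M.rk_mono X M.E hXE hEE
  constructor
  · intro H
    by_cases hk : M.rk M.E ≤ M.rk X
    · exact Or.inl (le_antisymm hrXE hk)
    · right
      push_neg at hk
      have hflat : M.IsFlat X := by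
        refine ⟨hXE, Subset.antisymm ?_ (FinMatroid.subset_cl_s7 hXE)⟩
        intro e he
        obtain ⟨heE, hre⟩ := mem_filter.mp he
        by_contra heX
        have hA : {e} ⊆ M.E \ X := by
          simp only [singleton_subset_iff, mem_sdiff]; exact ⟨heE, heX⟩
        have hH := H {e} hA
        rw [← insert_eq, card_singleton] at hH
        have h1 := M.rk_mono X (insert e X) (subset_insert _ _) (insert_subset heE hXE)
        omega
      refine ⟨hflat, ?_⟩
      rintro Z ⟨hZE, hZcl, hZcyc⟩ hZne
      have hXZ : X ∪ Z ⊆ M.E := union_subset hXE hZE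
      rw [FinMatroid.cl_eq_ground_iff hXZ]
      have hAsub : Z \ X ⊆ M.E \ X := sdiff_subset_sdiff hZE Finset.Subset.rfl
      have hAX : Z \ X ∪ X = X ∪ Z := by
        ext x; simp only [mem_union, mem_sdiff]
        constructor
        · rintro (⟨h, _⟩ | h) <;> tauto
        · intro h; by_cases hx : x ∈ X <;> tauto
      have hH := H (Z \ X) hAsub
      rw [hAX] at hH
      have hmono1 : M.rk X ≤ M.rk (X ∪ Z) := M.rk_mono X _ subset_union_left hXZ
      have hmono2 : M.rk (X ∪ Z) ≤ M.rk M.E := M.rk_mono _ M.E hXZ hEE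
      by_cases hcase : (Z \ X).card < M.rk M.E - M.rk X
      · exfalso
        have hrk : M.rk (X ∪ Z) = M.rk X + (Z \ X).card := by omega
        rcases (Z \ X).eq_empty_or_nonempty with hAe | ⟨e, heA⟩
        · have hZX : Z ⊆ X := by
            intro x hx
            by_contra hxX
            have : x ∈ Z \ X := mem_sdiff.mpr ⟨hx, hxX⟩
            rw [hAe] at this
            exact notMem_empty _ this
          have hZnonempty : Z.Nonempty := by
            rcases Z.eq_empty_or_nonempty with h0 | h
            · subst h0; exact absurd hZcl.symm hZne
            · exact h
          obtain ⟨e, heZ⟩ := hZnonempty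
          have hecyc : M.rk (Z.erase e) = M.rk Z :=
            (mem_filter.mp (hZcyc.symm ▸ heZ : e ∈ M.cyc Z)).2
          have h1 := FinMatroid.indep_subset hXE hXind hZX
          have h2 := FinMatroid.indep_subset (S := Z.erase e) hXE hXind
            ((erase_subset _ _).trans hZX)
          rw [card_erase_of_mem heZ] at h2
          have h3 : Z.card ≠ 0 := card_ne_zero_of_mem heZ
          omega
        · obtain ⟨heZ, heX⟩ := mem_sdiff.mp heA
          have hecyc : M.rk (Z.erase e) = M.rk Z :=
            (mem_filter.mp (hZcyc.symm ▸ heZ : e ∈ M.cyc Z)).2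
          have h1 : M.rk (X ∪ Z.erase e) = M.rk (X ∪ Z) :=
            FinMatroid.rk_union_erase hXE hZE hecyc
          have hEq : X ∪ Z.erase e = X ∪ (Z \ X).erase e := by
            ext x; simp only [mem_union, mem_erase, mem_sdiff]
            constructor
            · rintro (h | ⟨hxe, hxZ⟩)
              · tauto
              · by_cases hx : x ∈ X <;> tauto
            · rintro (h | ⟨hxe, hxZ, _⟩) <;> tauto
          have h2 : M.rk (X ∪ (Z \ X).erase e) ≤ M.rk X + ((Z \ X).erase e).card :=
            FinMatroid.rk_union_le hXE ((erase_subset _ _).trans (sdiff_subset.trans hZE))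
          rw [card_erase_of_mem heA] at h2
          have h3 : (Z \ X).card ≠ 0 := card_ne_zero_of_mem heA
          rw [hEq] at h1
          omega
      · omega
  · rintro (hbasis | ⟨⟨_, hXcl⟩, hZ⟩)
    · intro A hA
      have h1 : A ∪ X ⊆ M.E := union_subset (fun a ha => (mem_sdiff.mp (hA ha)).1) hXE
      have h2 := M.rk_mono X _ subset_union_right h1
      have h3 := M.rk_mono _ M.E h1 hEE
      omega
    · have key : ∀ n : ℕ, ∀ B ⊆ M.E \ X, B.card ≤ n → B.card ≤ M.rk M.E - M.rk X →
          M.rk (B ∪ X) = M.rk X + B.card := by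
        intro n
        induction n with
        | zero =>
          intro B _ hc _
          rw [card_eq_zero.mp (Nat.le_zero.mp hc)]
          simp
        | succ n ih =>
          intro B hB hcard hk
          by_cases hBn : B.card ≤ n
          · exact ih B hB hBn hk
          have hBcard : B.card = n + 1 := by omega
          by_contra hne
          have hBE : B ⊆ M.E := fun a ha => (mem_sdiff.mp (hB ha)).1
          have hBX : B ∪ X ⊆ M.E := union_subset hBE hXE
          have hub : M.rk (B ∪ X) ≤ M.rk X + B.card := by
            have h := FinMatroid.rk_union_le hXE hBE
            rw [union_comm] at h
            exact h
          have hlt : M.rk (B ∪ X) + 1 ≤ M.rk X + B.card := by omega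
          have hIH : ∀ B' ⊂ B, M.rk (B' ∪ X) = M.rk X + B'.card := by
            intro B' hB'
            have hc' : B'.card ≤ n := by have := card_lt_card hB'; omega
            exact ih B' (hB'.subset.trans hB) hc' (by omega)
          obtain ⟨e0, he0⟩ : B.Nonempty := card_pos.mp (by omega)
          have hB2 : 2 ≤ B.card := by
            by_contra h
            have hB1 : B.card = 1 := by omega
            obtain ⟨a, ha⟩ := card_eq_one.mp hB1
            have hae : a = e0 := by
              have := he0; rw [ha, mem_singleton] at this; exact this.symm
            subst hae
            rw [ha] at hlt
            rw [← insert_eq, card_singleton] at hlt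
            have h1 := M.rk_mono X (insert a X) (subset_insert _ _)
              (insert_subset (hBE (ha ▸ mem_singleton_self a)) hXE)
            have hreq : M.rk (insert a X) = M.rk X := by omega
            have haX : a ∈ M.cl X :=
              mem_filter.mpr ⟨hBE (ha ▸ mem_singleton_self a), hreq⟩
            rw [hXcl] at haX
            exact (mem_sdiff.mp (hB (ha ▸ mem_singleton_self a))).2 haX
          have hcirc : ∀ e ∈ B, M.rk (B.erase e ∪ X) = M.rk X + B.card - 1 := by
            intro e he
            have h := hIH (B.erase e) (erase_ssubset he)
            rw [card_erase_of_mem he] at h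
            omega
          have hrkBX : M.rk (B ∪ X) = M.rk X + B.card - 1 := by
            have h1 := hcirc e0 he0
            have h2 : M.rk (B.erase e0 ∪ X) ≤ M.rk (B ∪ X) :=
              M.rk_mono _ _ (union_subset_union (erase_subset _ _) Finset.Subset.rfl) hBX
            omega
          have hXBE : X ∪ B ⊆ M.E := union_subset hXE hBE
          have hFE : M.cl (X ∪ B) ⊆ M.E := M.cl_subset_ground _
          have hFflat : M.cl (M.cl (X ∪ B)) = M.cl (X ∪ B) := FinMatroid.cl_idem_s7 hXBE
          have hrkF : M.rk (M.cl (X ∪ B)) = M.rk X + B.card - 1 := by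
            rw [FinMatroid.rk_cl_s7 hXBE, union_comm]
            exact hrkBX
          have hXF : X ⊆ M.cl (X ∪ B) :=
            subset_union_left.trans (FinMatroid.subset_cl_s7 hXBE)
          have hBF : B ⊆ M.cl (X ∪ B) :=
            subset_union_right.trans (FinMatroid.subset_cl_s7 hXBE)
          have hBZ : ∀ e ∈ B, e ∈ M.cyc (M.cl (X ∪ B)) := by
            intro e he
            refine mem_filter.mpr ⟨hBF he, ?_⟩
            have hsub : X ∪ B.erase e ⊆ (M.cl (X ∪ B)).erase e := by
              intro x hx
              refine mem_erase.mpr ⟨?_, ?_⟩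
              · rintro rfl
                rcases mem_union.mp hx with h | h
                · exact (mem_sdiff.mp (hB he)).2 h
                · exact notMem_erase _ _ h
              · exact (union_subset hXF ((erase_subset _ _).trans hBF)) hx
            have h1 : M.rk (X ∪ B.erase e) ≤ M.rk ((M.cl (X ∪ B)).erase e) :=
              M.rk_mono _ _ hsub ((erase_subset _ _).trans hFE)
            have h2 : M.rk ((M.cl (X ∪ B)).erase e) ≤ M.rk (M.cl (X ∪ B)) :=
              M.rk_mono _ _ (erase_subset _ _) hFE
            have h3 : M.rk (X ∪ B.erase e) = M.rk X + B.card - 1 := by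
              rw [union_comm]; exact hcirc e he
            omega
          have hZcf : M.IsCyclicFlat (M.cyc (M.cl (X ∪ B))) :=
            ⟨(filter_subset _ _).trans hFE, FinMatroid.cl_cyc_eq hFE hFflat,
              FinMatroid.cyc_cyc_eq hFE⟩
          have hZne : M.cyc (M.cl (X ∪ B)) ≠ M.cl ∅ := by
            intro h
            have he0Z := hBZ e0 he0
            rw [h] at he0Z
            obtain ⟨he0E, hre0⟩ := mem_filter.mp he0Z
            have hre : M.rk {e0} = 0 := by
              have : (insert e0 ∅ : Finset α) = {e0} := rfl
              rw [this, M.rk_empty] at hre0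
              exact hre0
            have hssub : {e0} ⊂ B := by
              refine (singleton_subset_iff.mpr he0).ssubset_of_ne ?_
              intro hc
              rw [← hc, card_singleton] at hB2
              omega
            have h1 := hIH {e0} hssub
            rw [card_singleton] at h1
            have h2 : M.rk ({e0} ∪ X) ≤ M.rk {e0} + M.rk X := by
              have hsm := M.rk_submod {e0} X (singleton_subset_iff.mpr (hBE he0)) hXE
              omega
            omega
          have hclE := hZ _ hZcf hZne
          have hsub2 : X ∪ M.cyc (M.cl (X ∪ B)) ⊆ M.cl (X ∪ B) :=
            union_subset hXF (filter_subset _ _)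
          have hEF : M.E ⊆ M.cl (X ∪ B) := by
            calc M.E = M.cl (X ∪ M.cyc (M.cl (X ∪ B))) := hclE.symm
            _ ⊆ M.cl (M.cl (X ∪ B)) := FinMatroid.cl_mono_s7 hsub2 hFE
            _ = M.cl (X ∪ B) := hFflat
          have hFeq : M.cl (X ∪ B) = M.E := Subset.antisymm hFE hEF
          rw [hFeq] at hrkF
          omega
      intro A hA
      have hAE : A ⊆ M.E := fun a ha => (mem_sdiff.mp (hA ha)).1
      have hAXE : A ∪ X ⊆ M.E := union_subset hAE hXE
      have hmono1 : M.rk X ≤ M.rk (A ∪ X) := M.rk_mono X _ subset_union_right hAXE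
      by_cases hc : A.card ≤ M.rk M.E - M.rk X
      · have := key A.card A hA le_rfl hc
        omega
      · obtain ⟨B, hBA, hBcard⟩ := Finset.exists_subset_card_eq (s := A) (n := M.rk M.E - M.rk X) (by omega)
        have hkey := key B.card B (hBA.trans hA) le_rfl (by omega)
        have h1 : M.rk (B ∪ X) ≤ M.rk (A ∪ X) :=
          M.rk_mono _ _ (union_subset_union hBA Finset.Subset.rfl) hAXE
        have h2 : M.rk (A ∪ X) ≤ M.rk M.E := M.rk_mono _ _ hAXE hEE
        omega
end
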